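/- Let p ∈ (0,1) be fixed and s ≥ 1 an integer. Then t_{K_s}(p) = t^{α_s(p)}_{K_s}(p). Moreover, as a function of α ∈ [0,1], the map α ↦ t^{α}_{K_s}(p) is strictly decreasing on [0, α_s(p)) and strictly increasing on (α_s(p), 1]; in particular α_s(p) is the unique minimum point of t^{α}_{K_s}(p) over α ∈ [0,1]. -/

import Mathlib

open Filter

/-- `t_{K_s}(p) = -(1/s) log (2((1+p)/2)^s - p^s)`. -/
noncomputable def cliqueThreshold (p : ℝ) (s : ℕ) : ℝ :=
  -(1 / s) * Real.log (2 * ((1 + p) / 2) ^ s - p ^ s)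

/-- `α_s(p) = p (2((1+p)/2)^(s-1) - p^(s-1)) / (2((1+p)/2)^s - p^s)`. -/
noncomputable def alphaS (p : ℝ) (s : ℕ) : ℝ :=
  p * (2 * ((1 + p) / 2) ^ (s - 1) - p ^ (s - 1)) /
    (2 * ((1 + p) / 2) ^ s - p ^ s)

/-- `t^α_{K_s}(p)`, the exponent governing the expected number of `s`-cliques
containing a vertex whose feature subcube has dimension `αd`. (At `α = 0` and
`α = 1` Lean's conventions `x/0 = 0`, `log 0 = 0`, `0 * log … = 0` give exactly the
interpretation by continuity.) -/
noncomputable def dimCliqueThreshold (p : ℝ) (s : ℕ) (α : ℝ) : ℝ :=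
  -(1 / s) *
    (α * Real.log ((p / α) * (2 * ((1 + p) / 2) ^ (s - 1) - p ^ (s - 1))) +
      (1 - α) * Real.log (((1 - p) / (1 - α)) * ((1 + p) / 2) ^ (s - 1)))

/-- **Proposition (the dimension `α_s` minimises `t^α_{K_s}`).** For fixed
`p ∈ (0,1)` and `s ≥ 1`: `t_{K_s}(p) = t^{α_s(p)}_{K_s}(p)`; moreover
`α ↦ t^α_{K_s}(p)` is strictly decreasing on `[0, α_s(p))`, strictly increasing on
`(α_s(p), 1]`, and `α_s(p)` is its unique minimum point on `[0,1]`. -/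
theorem dimCliqueThreshold_min (p : ℝ) (hp : p ∈ Set.Ioo (0 : ℝ) 1)
    (s : ℕ) (hs : 1 ≤ s) :
    cliqueThreshold p s = dimCliqueThreshold p s (alphaS p s) ∧
    StrictAntiOn (dimCliqueThreshold p s) (Set.Ico 0 (alphaS p s)) ∧
    StrictMonoOn (dimCliqueThreshold p s) (Set.Ioc (alphaS p s) 1) ∧
    ∀ α ∈ Set.Icc (0 : ℝ) 1, α ≠ alphaS p s →
      dimCliqueThreshold p s (alphaS p s) < dimCliqueThreshold p s α := by
  obtain ⟨hp0, hp1⟩ := hp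
  obtain ⟨n, rfl⟩ : ∃ n, s = n + 1 := ⟨s - 1, (Nat.succ_pred_eq_of_pos hs).symm⟩
  set q : ℝ := (1 + p) / 2 with hq
  have hq0 : 0 < q := by positivity
  have hpq : p < q := by rw [hq]; linarith
  have hpow : p ^ n ≤ q ^ n := pow_le_pow_left₀ hp0.le hpq.le n
  set C : ℝ := 2 * q ^ n - p ^ n with hCdef
  have hC : 0 < C := by
    have : (0:ℝ) < q ^ n := by positivity
    simp only [hCdef]; nlinarith
  set A : ℝ := p * C with hAdef
  set B : ℝ := (1 - p) * q ^ n with hBdef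
  have hA : 0 < A := by positivity
  have hB : 0 < B := by
    have : (0:ℝ) < q ^ n := by positivity
    nlinarith
  have hAB : 0 < A + B := by linarith
  have hS : 2 * q ^ (n+1) - p ^ (n+1) = A + B := by
    simp only [hAdef, hBdef, hCdef, pow_succ, hq]; ring
  set F : ℝ → ℝ := fun α => α * Real.log (A / α) + (1 - α) * Real.log (B / (1 - α))
    with hFdef
  -- dimCliqueThreshold in terms of F
  have hdim : ∀ α : ℝ, dimCliqueThreshold p (n+1) α = -(1/(n+1 : ℕ)) * F α := by
    intro α
    have h1 : (p / α) * C = A / α := by rw [hAdef]; ring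
    have h2 : ((1 - p) / (1 - α)) * q ^ n = B / (1 - α) := by rw [hBdef]; ring
    simp only [dimCliqueThreshold, Nat.add_sub_cancel, hFdef, ← hq, ← hCdef, h1, h2]
  -- F as entropy form
  have hF : ∀ α : ℝ, F α = Real.log B + α * (Real.log A - Real.log B)
      + Real.negMulLog α + Real.negMulLog (1 - α) := by
    intro α
    have key : ∀ (X z : ℝ), 0 < X → z * Real.log (X / z)
        = z * Real.log X + Real.negMulLog z := by
      intro X z hX
      rcases eq_or_ne z 0 with rfl | hz
      · simp
      · rw [Real.log_div hX.ne' hz, Real.negMulLog]; ring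
    rw [hFdef]
    simp only [key A α hA, key B (1-α) hB]
    ring
  set m : ℝ := A / (A + B) with hm
  have hm0 : 0 < m := div_pos hA hAB
  have hm1 : m < 1 := (div_lt_one hAB).2 (by linarith)
  have hmalpha : alphaS p (n+1) = m := by
    simp only [alphaS, Nat.add_sub_cancel, ← hq, ← hCdef, hS, hm, hAdef]
  -- value at m
  have hFeq : F m = Real.log (A + B) := by
    have h1 : A / m = A + B := by
      rw [hm]; field_simp
    have h2 : (1 : ℝ) - m = B / (A + B) := by
      rw [hm]; field_simp; ring
    have h3 : B / (1 - m) = A + B := by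
      rw [h2]; field_simp
    rw [hFdef]; simp only [h1, h3]; ring
  -- strict max
  have hFmax : ∀ α ∈ Set.Icc (0:ℝ) 1, α ≠ m → F α < Real.log (A + B) := by
    intro α ⟨hα0, hα1⟩ hαm
    rcases eq_or_lt_of_le hα0 with rfl | hα0'
    · have : F 0 = Real.log B := by simp [hFdef]
      rw [this]
      exact Real.log_lt_log hB (by linarith)
    rcases eq_or_lt_of_le hα1 with rfl | hα1'
    · have : F 1 = Real.log A := by simp [hFdef]
      rw [this]
      exact Real.log_lt_log hA (by linarith)
    · have ha : A / α ∈ Set.Ioi (0:ℝ) := div_pos hA hα0'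
      have hb : B / (1 - α) ∈ Set.Ioi (0:ℝ) := div_pos hB (by linarith)
      have hne : A / α ≠ B / (1 - α) := by
        intro h
        apply hαm
        rw [div_eq_div_iff hα0'.ne' (by linarith : (1:ℝ) - α ≠ 0)] at h
        rw [hm]
        field_simp
        nlinarith
      have := strictConcaveOn_log_Ioi.2 ha hb hne hα0' (by linarith : 0 < 1 - α)
        (by ring)
      simp only [smul_eq_mul] at this
      have e1 : α * (A / α) = A := by
        rw [mul_comm]; exact div_mul_cancel₀ A hα0'.ne'
      have e2 : (1 - α) * (B / (1 - α)) = B := by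
        rw [mul_comm]; exact div_mul_cancel₀ B (by linarith : (1:ℝ) - α ≠ 0)
      rw [e1, e2] at this
      exact this
  -- strict concavity of F on [0,1]
  have hcpos : (0:ℝ) < 1 / (n+1 : ℕ) := by positivity
  have hconc : ∀ x ∈ Set.Icc (0:ℝ) 1, ∀ y ∈ Set.Icc (0:ℝ) 1, x ≠ y →
      ∀ t u : ℝ, 0 < t → 0 < u → t + u = 1 →
      t * F x + u * F y < F (t * x + u * y) := by
    intro x ⟨hx0, hx1⟩ y ⟨hy0, hy1⟩ hxy t u ht hu htu
    have h1 := Real.strictConcaveOn_negMulLog.2 (Set.mem_Ici.2 hx0)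
      (Set.mem_Ici.2 hy0) hxy ht hu htu
    have h2 := Real.strictConcaveOn_negMulLog.2
      (Set.mem_Ici.2 (by linarith : (0:ℝ) ≤ 1 - x))
      (Set.mem_Ici.2 (by linarith : (0:ℝ) ≤ 1 - y))
      (by intro h; apply hxy; linarith) ht hu htu
    simp only [smul_eq_mul] at h1 h2
    have e : t * (1 - x) + u * (1 - y) = 1 - (t * x + u * y) := by
      linear_combination htu
    rw [e] at h2
    have goal_eq : F (t * x + u * y) - (t * F x + u * F y) =
        (Real.negMulLog (t * x + u * y)
          - (t * Real.negMulLog x + u * Real.negMulLog y)) +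
        (Real.negMulLog (1 - (t * x + u * y))
          - (t * Real.negMulLog (1 - x) + u * Real.negMulLog (1 - y))) := by
      rw [hF x, hF y, hF (t * x + u * y)]
      linear_combination (-Real.log B) * htu
    linarith [h1, h2, goal_eq]
  rw [hmalpha]
  refine ⟨?_, ?_, ?_, ?_⟩
  · rw [hdim m, hFeq, cliqueThreshold, hS]
  · intro x hx y hy hxylt
    obtain ⟨hx0, hxm⟩ := hx
    obtain ⟨hy0, hym⟩ := hy
    rw [hdim x, hdim y]
    have hxIcc : x ∈ Set.Icc (0:ℝ) 1 := ⟨hx0, by linarith⟩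
    have hmIcc : m ∈ Set.Icc (0:ℝ) 1 := ⟨hm0.le, hm1.le⟩
    set t : ℝ := (m - y) / (m - x) with htdef
    set u : ℝ := (y - x) / (m - x) with hudef
    have hmx : 0 < m - x := by linarith
    have ht : 0 < t := div_pos (by linarith) hmx
    have hu : 0 < u := div_pos (by linarith) hmx
    have htu : t + u = 1 := by
      rw [htdef, hudef, ← add_div, div_eq_one_iff_eq hmx.ne']; ring
    have hy' : t * x + u * m = y := by
      rw [htdef, hudef]; field_simp; ring
    have h1 := hconc x hxIcc m hmIcc (by linarith) t u ht hu htu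
    rw [hy'] at h1
    have h2 : F x < F m := by rw [hFeq]; exact hFmax x hxIcc (by linarith)
    have e : t * F x + u * F x = F x := by linear_combination F x * htu
    have hFxy : F x < F y :=
      by linarith [mul_lt_mul_of_pos_left h2 hu]
    have := mul_lt_mul_of_pos_left hFxy hcpos
    linarith
  · intro x hx y hy hxylt
    obtain ⟨hmx, hx1⟩ := hx
    obtain ⟨hmy, hy1⟩ := hy
    rw [hdim x, hdim y]
    have hyIcc : y ∈ Set.Icc (0:ℝ) 1 := ⟨by linarith, hy1⟩
    have hmIcc : m ∈ Set.Icc (0:ℝ) 1 := ⟨hm0.le, hm1.le⟩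
    set t : ℝ := (y - x) / (y - m) with htdef
    set u : ℝ := (x - m) / (y - m) with hudef
    have hym : 0 < y - m := by linarith
    have ht : 0 < t := div_pos (by linarith) hym
    have hu : 0 < u := div_pos (by linarith) hym
    have htu : t + u = 1 := by
      rw [htdef, hudef, ← add_div, div_eq_one_iff_eq hym.ne']; ring
    have hx' : t * m + u * y = x := by
      rw [htdef, hudef]; field_simp; ring
    have h1 := hconc m hmIcc y hyIcc (by linarith) t u ht hu htu
    rw [hx'] at h1
    have h2 : F y < F m := by rw [hFeq]; exact hFmax y hyIcc (by linarith)
    have e : t * F y + u * F y = F y := by linear_combination F y * htu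
    have hFxy : F y < F x :=
      by linarith [mul_lt_mul_of_pos_left h2 ht]
    have := mul_lt_mul_of_pos_left hFxy hcpos
    linarith
  · intro α hα hαm
    rw [hdim α, hdim m, hFeq]
    have h := hFmax α hα hαm
    have := mul_lt_mul_of_pos_left h hcpos
    linarith
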